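/- arXiv:1503.09108 — 2 statements merged into one kernel-verified Lean document; each statement's English description precedes it below -/
import Mathlib

section
/- Let n ≥ 1, let A be a real symmetric (n+1)×(n+1) matrix and f ∈ ℝ^{n+1}, and suppose u := fᵀ·(adj A)·f ≠ 0; set N := (adj A)·f. For any real q ≠ 0 define M_q := A − u⁻¹(det A)·ffᵀ + q·u⁻¹·ffᵀ. Then: (i) det M_q = q, so M_q is invertible; (ii) the matrix σ := M_q⁻¹ − q⁻¹u⁻¹·NNᵀ is independent of the choice of q ≠ 0; (iii) σ·f = 0; (iv) σ·(A − u⁻¹(det A)·ffᵀ) = I − u⁻¹·Nfᵀ, so the restriction of σ to the hyperplane f^⊥ inverts the restriction of A − u⁻¹(det A)·ffᵀ. -/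
/-!
Write `M_q = A + c • f fᵀ` with `c = (q - det A) / u`. The matrix determinant lemma in its
adjugate form, `det (A + c • f fᵀ) = det A + c * fᵀ (adj A) f`, gives `det M_q = q`, and
`M_q N = (det M_q) • f = q • f`. Hence `M_q⁻¹ f = q⁻¹ • N`, which makes `σ_q f = 0`, and by
symmetry of `M_q` also `σ_q M_q = 1 - u⁻¹ • N fᵀ`. As `σ_q` kills `f`, right multiplication by
`M_{q'}` or by `M_q` (which differ by a multiple of `f fᵀ`) gives the same result, so
`σ_q M_{q'} = σ_{q'} M_{q'}` and cancelling the invertible `M_{q'}` gives `σ_q = σ_{q'}`.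
-/

open Matrix

namespace Matrix

section CommRing

variable {m R : Type*} [Fintype m] [CommRing R]

theorem mul_add_smul_vecMulVec_of_mulVec_eq_zero {σ B : Matrix m m R} {f : m → R}
    (hσf : σ *ᵥ f = 0) (c : R) (g : m → R) : σ * (B + c • vecMulVec f g) = σ * B := by
  rw [Matrix.mul_add, Matrix.mul_smul, mul_vecMulVec, hσf, zero_vecMulVec, smul_zero, add_zero]

variable [DecidableEq m]

theorem det_add_vecMulVec_piecewise (A : Matrix m m R) (u v : m → R) (S : Finset m) :
    (A + vecMulVec (S.piecewise u 0) v).det =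
      A.det + ∑ i ∈ S, u i * (A.updateRow i v).det := by
  induction S using Finset.induction_on generalizing A with
  | empty => simp
  | insert j S hj ih =>
    have hshift : A + vecMulVec ((insert j S).piecewise u 0) v
        = A.updateRow j (A j + u j • v) + vecMulVec (S.piecewise u 0) v := by
      ext i k
      obtain rfl | hi := eq_or_ne i j <;>
        simp [Finset.piecewise_insert, update_vecMulVec, vecMulVec_apply, updateRow_apply, *]
    have hrow : ∀ i ∈ S,
        ((A.updateRow j (A j + u j • v)).updateRow i v).det = (A.updateRow i v).det := by
      intro i hi
      -- once row `i` is `v`, adding `u j • v` to row `j` is an elementary row operation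
      have hij : j ≠ i := fun h => hj (h ▸ hi)
      have h := det_updateRow_add_smul_self (A.updateRow i v) hij (u j)
      rwa [updateRow_self, updateRow_ne hij, updateRow_comm _ hij.symm] at h
    rw [hshift, ih, Finset.sum_insert hj, det_updateRow_add, det_updateRow_smul,
      updateRow_eq_self, Finset.sum_congr rfl fun i hi => congrArg (u i * ·) (hrow i hi)]
    ring

/-- The matrix determinant lemma, without invertibility of `A`. -/
theorem det_add_vecMulVec (A : Matrix m m R) (u v : m → R) :
    (A + vecMulVec u v).det = A.det + v ⬝ᵥ A.adjugate *ᵥ u := by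
  rw [dotProduct_mulVec, dotProduct_comm]
  simpa [← cramer_transpose_apply, cramer_eq_adjugate_mulVec, ← adjugate_transpose,
    mulVec_transpose, dotProduct] using
    det_add_vecMulVec_piecewise A u v Finset.univ

theorem det_add_smul_vecMulVec_self (A : Matrix m m R) (f : m → R) (c : R) :
    (A + c • vecMulVec f f).det = A.det + c * (f ⬝ᵥ A.adjugate *ᵥ f) := by
  rw [← smul_vecMulVec, det_add_vecMulVec, mulVec_smul, dotProduct_smul, smul_eq_mul]

theorem add_smul_vecMulVec_self_mulVec_adjugate (A : Matrix m m R) (f : m → R) (c : R) :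
    (A + c • vecMulVec f f) *ᵥ (A.adjugate *ᵥ f) = (A + c • vecMulVec f f).det • f := by
  rw [det_add_smul_vecMulVec_self, add_mulVec, mulVec_mulVec, mul_adjugate, smul_mulVec,
    one_mulVec, smul_mulVec, vecMulVec_mulVec, op_smul_eq_smul, smul_smul, add_smul]

end CommRing

section Field

variable {m K : Type*} [Fintype m] [DecidableEq m] [Field K]
  {M : Matrix m m K} {f N : m → K} {q : K}

theorem inv_mulVec_eq_of_mulVec_eq (hM : IsUnit M.det) (hq : q ≠ 0) (hMN : M *ᵥ N = q • f) :
    M⁻¹ *ᵥ f = q⁻¹ • N := by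
  rw [eq_inv_smul_iff₀ hq, ← mulVec_smul, ← hMN, mulVec_mulVec, nonsing_inv_mul _ hM, one_mulVec]

theorem inv_sub_smul_vecMulVec_mulVec_eq_zero (hM : IsUnit M.det) (hq : q ≠ 0)
    (hMN : M *ᵥ N = q • f) {u : K} (hNf : N ⬝ᵥ f = u) (hu : u ≠ 0) :
    (M⁻¹ - (q⁻¹ * u⁻¹) • vecMulVec N N) *ᵥ f = 0 := by
  rw [sub_mulVec, smul_mulVec, vecMulVec_mulVec, inv_mulVec_eq_of_mulVec_eq hM hq hMN, hNf,
    op_smul_eq_smul, smul_smul, inv_mul_cancel_right₀ hu, sub_self]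

theorem inv_sub_smul_vecMulVec_mul_eq (hM : IsUnit M.det) (hMs : M.IsSymm) (hq : q ≠ 0)
    (hMN : M *ᵥ N = q • f) (u : K) :
    (M⁻¹ - (q⁻¹ * u⁻¹) • vecMulVec N N) * M = 1 - u⁻¹ • vecMulVec N f := by
  rw [Matrix.sub_mul, nonsing_inv_mul _ hM, Matrix.smul_mul, vecMulVec_mul, ← mulVec_transpose,
    hMs, hMN, vecMulVec_smul, smul_smul, mul_right_comm, inv_mul_cancel₀ hq, one_mul]

end Field

end Matrix

theorem stmt3_general (n : ℕ)
    (A : Matrix (Fin (n+1)) (Fin (n+1)) ℝ) (hA : A.IsSymm)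
    (f : Fin (n+1) → ℝ)
    (u : ℝ) (hu : u = f ⬝ᵥ (A.adjugate *ᵥ f)) (hu0 : u ≠ 0)
    (N : Fin (n+1) → ℝ) (hN : N = A.adjugate *ᵥ f)
    (M : ℝ → Matrix (Fin (n+1)) (Fin (n+1)) ℝ)
    (hM : ∀ q : ℝ, M q = A - (u⁻¹ * A.det) • vecMulVec f f + (q * u⁻¹) • vecMulVec f f) :
    (∀ q : ℝ, q ≠ 0 → (M q).det = q ∧ IsUnit (M q).det) ∧
    (∀ q q' : ℝ, q ≠ 0 → q' ≠ 0 →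
      (M q)⁻¹ - (q⁻¹ * u⁻¹) • vecMulVec N N = (M q')⁻¹ - (q'⁻¹ * u⁻¹) • vecMulVec N N) ∧
    (∀ q : ℝ, q ≠ 0 → ((M q)⁻¹ - (q⁻¹ * u⁻¹) • vecMulVec N N) *ᵥ f = 0) ∧
    (∀ q : ℝ, q ≠ 0 →
      ((M q)⁻¹ - (q⁻¹ * u⁻¹) • vecMulVec N N) * (A - (u⁻¹ * A.det) • vecMulVec f f)
        = 1 - u⁻¹ • vecMulVec N f) := by
  have hMq : ∀ q, M q = A + ((q - A.det) * u⁻¹) • vecMulVec f f := fun q => by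
    rw [hM q]; module
  have hdet : ∀ q, (M q).det = q := fun q => by
    rw [hMq, det_add_smul_vecMulVec_self, ← hu]; field_simp; ring
  have hunit : ∀ q, q ≠ 0 → IsUnit (M q).det := fun q hq => by
    rw [hdet]; exact hq.isUnit
  have hMN : ∀ q, M q *ᵥ N = q • f := fun q => by
    rw [hN, hMq, add_smul_vecMulVec_self_mulVec_adjugate, ← hMq, hdet]
  have hsymm : ∀ q, (M q).IsSymm := fun q => by
    rw [hMq]; exact hA.add (IsSymm.smul (transpose_vecMulVec f f) _)
  have hNf : N ⬝ᵥ f = u := by rw [hN, hu, dotProduct_comm]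
  have hσf : ∀ q, q ≠ 0 → ((M q)⁻¹ - (q⁻¹ * u⁻¹) • vecMulVec N N) *ᵥ f = 0 := fun q hq =>
    inv_sub_smul_vecMulVec_mulVec_eq_zero (hunit q hq) hq (hMN q) hNf hu0
  have hσM : ∀ q, q ≠ 0 → ∀ q', ((M q)⁻¹ - (q⁻¹ * u⁻¹) • vecMulVec N N) * M q'
      = 1 - u⁻¹ • vecMulVec N f := fun q hq q' => by
    rw [hM q', mul_add_smul_vecMulVec_of_mulVec_eq_zero (hσf q hq),
      ← mul_add_smul_vecMulVec_of_mulVec_eq_zero (hσf q hq) (q * u⁻¹), ← hM q,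
      inv_sub_smul_vecMulVec_mul_eq (hunit q hq) (hsymm q) hq (hMN q)]
  refine ⟨fun q hq => ⟨hdet q, hunit q hq⟩, fun q q' hq hq' => ?_, hσf, fun q hq => ?_⟩
  · exact ((isUnit_iff_isUnit_det _).mpr (hunit q' hq')).mul_right_cancel
      ((hσM q hq q').trans (hσM q' hq' q').symm)
  · rw [← mul_add_smul_vecMulVec_of_mulVec_eq_zero (hσf q hq) (q * u⁻¹), ← hM q]
    exact hσM q hq q

/-- for a symmetric matrix `A` and a vector `f` with
`u = fᵀ (adj A) f ≠ 0`, the matrices `M_q = A − u⁻¹(det A) f fᵀ + q u⁻¹ f fᵀ` have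
determinant `q`, and `σ = M_q⁻¹ − q⁻¹ u⁻¹ N Nᵀ` (with `N = (adj A) f`) is independent
of `q`, annihilates `f`, and inverts `A − u⁻¹ (det A) f fᵀ` on the hyperplane `f^⊥`. -/
theorem stmt3 (n : ℕ) (hn : 1 ≤ n)
    (A : Matrix (Fin (n+1)) (Fin (n+1)) ℝ) (hA : A.IsSymm)
    (f : Fin (n+1) → ℝ)
    (u : ℝ) (hu : u = f ⬝ᵥ (A.adjugate *ᵥ f)) (hu0 : u ≠ 0)
    (N : Fin (n+1) → ℝ) (hN : N = A.adjugate *ᵥ f)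
    (M : ℝ → Matrix (Fin (n+1)) (Fin (n+1)) ℝ)
    (hM : ∀ q : ℝ, M q = A - (u⁻¹ * A.det) • vecMulVec f f + (q * u⁻¹) • vecMulVec f f) :
    (∀ q : ℝ, q ≠ 0 → (M q).det = q ∧ IsUnit (M q).det) ∧
    (∀ q q' : ℝ, q ≠ 0 → q' ≠ 0 →
      (M q)⁻¹ - (q⁻¹ * u⁻¹) • vecMulVec N N = (M q')⁻¹ - (q'⁻¹ * u⁻¹) • vecMulVec N N) ∧
    (∀ q : ℝ, q ≠ 0 → ((M q)⁻¹ - (q⁻¹ * u⁻¹) • vecMulVec N N) *ᵥ f = 0) ∧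
    (∀ q : ℝ, q ≠ 0 →
      ((M q)⁻¹ - (q⁻¹ * u⁻¹) • vecMulVec N N) * (A - (u⁻¹ * A.det) • vecMulVec f f)
        = 1 - u⁻¹ • vecMulVec N f) :=
  stmt3_general n A hA f u hu hu0 N hN M hM
end

section
/- Let n ≥ 1, let M ⊆ ℝⁿ be open, let A : M → ℝ^{n+1} be C^∞, let Q ∈ C^∞(M), and define F(u,x) = Σ_{i=1}^{n+1} aⁱ(u)·xᵢ + Q(u) on M × ℝ^{n+1} ⊆ ℝ^{2n+1}, where a¹,…,a^{n+1} are the components of A. Let V(u) ∈ ℝ^{2n+1} be the vector whose u-components are 0 and whose xᵢ-component is (−1)^{i+1}·dA^{(i)}(u), where dA^{(i)}(u) is the determinant of the n×n matrix obtained from the Jacobian dA(u) by deleting its i-th row. Then A is an immersion (dA(u) has rank n for all u ∈ M) if and only if Hess F(u,x) has rank 2n at every point (u,x) ∈ M × ℝ^{n+1}; and in that case, for every (u,x), the kernel of Hess F(u,x) is the line spanned by V(u). -/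
open Matrix

noncomputable def pd1 {ι : Type*} [Fintype ι] [DecidableEq ι]
    (F : (ι → ℝ) → ℝ) (i : ι) (x : ι → ℝ) : ℝ :=
  fderiv ℝ F x (Pi.single i 1)

noncomputable def gradv {ι : Type*} [Fintype ι] [DecidableEq ι]
    (F : (ι → ℝ) → ℝ) (x : ι → ℝ) : ι → ℝ :=
  fun i => pd1 F i x

noncomputable def hessM {ι : Type*} [Fintype ι] [DecidableEq ι]
    (F : (ι → ℝ) → ℝ) (x : ι → ℝ) : Matrix ι ι ℝ :=
  Matrix.of fun i j => pd1 (pd1 F j) i x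

noncomputable def Hdet {ι : Type*} [Fintype ι] [DecidableEq ι]
    (F : (ι → ℝ) → ℝ) (x : ι → ℝ) : ℝ :=
  (hessM F x).det

noncomputable def Nvec {ι : Type*} [Fintype ι] [DecidableEq ι]
    (F : (ι → ℝ) → ℝ) (x : ι → ℝ) : ι → ℝ :=
  (hessM F x).adjugate *ᵥ gradv F x

noncomputable def Uval {ι : Type*} [Fintype ι] [DecidableEq ι]
    (F : (ι → ℝ) → ℝ) (x : ι → ℝ) : ℝ :=
  gradv F x ⬝ᵥ Nvec F x

/-- The Jacobian matrix of a map `A : ℝ^m → ℝ^k`. -/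
noncomputable def Jac {m k : ℕ} (A : (Fin m → ℝ) → (Fin k → ℝ)) (u : Fin m → ℝ) :
    Matrix (Fin k) (Fin m) ℝ :=
  Matrix.of fun i j => fderiv ℝ (fun v => A v i) u (Pi.single j 1)

/-- `dA^{(i)}`: the determinant of the `m×m` matrix obtained from the Jacobian of
`A : ℝ^m → ℝ^{m+1}` by deleting its `i`-th row. -/
noncomputable def minorDel {m : ℕ} (A : (Fin m → ℝ) → (Fin (m+1) → ℝ))
    (i : Fin (m+1)) (u : Fin m → ℝ) : ℝ :=
  ((Jac A u).submatrix i.succAbove id).det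

/-- `det[A | dA]`: the determinant of the `(m+1)×(m+1)` matrix whose first column is
`A(u)` and whose remaining columns are those of the Jacobian of `A`. -/
noncomputable def AdA {m : ℕ} (A : (Fin m → ℝ) → (Fin (m+1) → ℝ)) (u : Fin m → ℝ) : ℝ :=
  (Matrix.of fun i j =>
    (Fin.cons (A u) (fun k i' => Jac A u i' k) : Fin (m+1) → (Fin (m+1) → ℝ)) j i).det

/-!
Since `F` is affine in `x`, its Hessian at `(u, x)` has the block form
`[[B, dAᵀ], [dA, 0]]` with `dA = Jac A u`. If `dA` is injective, a kernel vector `(a, b)`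
has `a = 0` and `b ⊥` the columns of `dA`, so the kernel is the line spanned by `(0, V)`,
where `V` is the generalized cross product of the columns of `dA`, and the rank is `2n`.
Conversely `b ↦ (0, b)` embeds `ker dAᵀ` into the kernel of the Hessian, so rank `2n`
forces `dim ker dAᵀ ≤ 1`, i.e. `rank dA = n`.
-/

open Module

section CrossVec

variable {R : Type*} [CommRing R] {n : ℕ}

/-- The generalized cross product of the `n` columns of `J`. -/
noncomputable def crossVec (J : Matrix (Fin (n+1)) (Fin n) R) : Fin (n+1) → R :=
  fun i => (-1) ^ (i : ℕ) * (J.submatrix i.succAbove id).det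

theorem det_cons_eq_dotProduct_crossVec (J : Matrix (Fin (n+1)) (Fin n) R)
    (y : Fin (n+1) → R) :
    (of fun i => vecCons (y i) (J i)).det = y ⬝ᵥ crossVec J := by
  rw [det_succ_column_zero, dotProduct]
  refine Finset.sum_congr rfl fun i _ => ?_
  have hminor : (of fun i => vecCons (y i) (J i)).submatrix i.succAbove Fin.succ
      = J.submatrix i.succAbove id := by
    ext; simp
  rw [hminor, crossVec, of_apply, cons_val_zero]
  ring

theorem transpose_mulVec_crossVec (J : Matrix (Fin (n+1)) (Fin n) R) :
    Jᵀ *ᵥ crossVec J = 0 := by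
  funext k
  rw [mulVec, ← det_cons_eq_dotProduct_crossVec]
  exact det_zero_of_column_eq (Fin.succ_ne_zero k).symm fun i => by simp

end CrossVec

section Field

variable {K : Type*} [Field K]

theorem rank_add_finrank_ker_mulVecLin {κ ι : Type*} [Fintype ι] (A : Matrix κ ι K) :
    A.rank + finrank K (LinearMap.ker A.mulVecLin) = Fintype.card ι := by
  rw [rank, LinearMap.finrank_range_add_finrank_ker, finrank_fintype_fun_eq_card]

theorem ker_mulVecLin_eq_bot_iff_rank_eq {κ ι : Type*} [Fintype ι] {A : Matrix κ ι K} :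
    LinearMap.ker A.mulVecLin = ⊥ ↔ A.rank = Fintype.card ι := by
  rw [← Submodule.finrank_eq_zero]
  have := rank_add_finrank_ker_mulVecLin A
  omega

theorem crossVec_ne_zero {n : ℕ} {J : Matrix (Fin (n+1)) (Fin n) K} (hJ : J.rank = n) :
    crossVec J ≠ 0 := by
  have hcols : LinearIndependent K J.col := by
    rw [linearIndependent_iff_card_eq_finrank_span, Set.finrank, ← rank_eq_finrank_span_cols,
      hJ, Fintype.card_fin]
  -- a vector `y` outside the column span completes the columns to a basis, so
  -- `y ⬝ᵥ crossVec J = det [y | J] ≠ 0`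
  obtain ⟨y, hy⟩ : ∃ y, y ∉ Submodule.span K (Set.range J.col) := by
    refine SetLike.exists_not_mem_of_ne_top _ (fun htop => ?_) rfl
    have := congrArg (fun s : Submodule K _ => finrank K s) htop
    simp [← rank_eq_finrank_span_cols, hJ] at this
  have hunit : IsUnit (of fun i => vecCons (y i) (J i)) := by
    have hcol : (of fun i => vecCons (y i) (J i)).col = Fin.cons y J.col := by
      ext j i
      refine Fin.cases ?_ (fun k => ?_) j <;> simp
    rw [← linearIndependent_cols_iff_isUnit, hcol]
    exact linearIndependent_finCons.2 ⟨hcols, hy⟩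
  intro h
  have := (isUnit_iff_isUnit_det _).1 hunit
  rw [det_cons_eq_dotProduct_crossVec, h, dotProduct_zero] at this
  exact not_isUnit_zero this

theorem ker_transpose_mulVecLin_eq_span_crossVec {n : ℕ} {J : Matrix (Fin (n+1)) (Fin n) K}
    (hJ : J.rank = n) : LinearMap.ker Jᵀ.mulVecLin = K ∙ crossVec J := by
  refine (Submodule.eq_of_le_of_finrank_le ?_ ?_).symm
  · rw [Submodule.span_singleton_le_iff_mem, LinearMap.mem_ker, mulVecLin_apply]
    exact transpose_mulVec_crossVec J
  · have := rank_add_finrank_ker_mulVecLin Jᵀ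
    rw [rank_transpose, hJ, Fintype.card_fin] at this
    rw [finrank_span_singleton (crossVec_ne_zero hJ)]
    omega

variable {ι κ : Type*}

variable (K ι) in
noncomputable def sumElimZero : (κ → K) →ₗ[K] (ι ⊕ κ → K) :=
  (LinearEquiv.sumArrowLequivProdArrow ι κ K K).symm.toLinearMap ∘ₗ LinearMap.inr K _ _

theorem sumElimZero_apply (b : κ → K) : sumElimZero K ι b = Sum.elim (0 : ι → K) b := rfl

theorem sumElimZero_injective : Function.Injective (sumElimZero K ι (κ := κ)) :=
  fun _ _ h => funext fun i => congrFun h (Sum.inr i)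

variable [Fintype ι] [Fintype κ]

theorem fromBlocks_mulVec_sumElim (B : Matrix ι ι K) (J : Matrix κ ι K) (a : ι → K)
    (b : κ → K) :
    fromBlocks B Jᵀ J 0 *ᵥ Sum.elim a b = Sum.elim (B *ᵥ a + Jᵀ *ᵥ b) (J *ᵥ a) := by
  simp [fromBlocks_mulVec]

theorem fromBlocks_mulVec_sumElim_eq_zero_iff (B : Matrix ι ι K) {J : Matrix κ ι K}
    (hJ : LinearMap.ker J.mulVecLin = ⊥) (a : ι → K) (b : κ → K) :
    fromBlocks B Jᵀ J 0 *ᵥ Sum.elim a b = 0 ↔ a = 0 ∧ Jᵀ *ᵥ b = 0 := by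
  rw [fromBlocks_mulVec_sumElim, ← Sum.elim_zero_zero, Sum.elim_eq_iff]
  constructor
  · rintro ⟨hBJ, hJa⟩
    obtain rfl : a = 0 := (LinearMap.ker_eq_bot'.1 hJ) a hJa
    simpa using hBJ
  · rintro ⟨rfl, hb⟩
    simp [hb]

theorem map_ker_transpose_le_ker_fromBlocks (B : Matrix ι ι K) (J : Matrix κ ι K) :
    (LinearMap.ker Jᵀ.mulVecLin).map (sumElimZero K ι) ≤
      LinearMap.ker (fromBlocks B Jᵀ J 0).mulVecLin := by
  rintro _ ⟨b, hb, rfl⟩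
  rw [SetLike.mem_coe, LinearMap.mem_ker, mulVecLin_apply] at hb
  rw [LinearMap.mem_ker, mulVecLin_apply, sumElimZero_apply, fromBlocks_mulVec_sumElim, hb]
  simp

theorem ker_fromBlocks_eq_map_ker_transpose (B : Matrix ι ι K) {J : Matrix κ ι K}
    (hJ : LinearMap.ker J.mulVecLin = ⊥) :
    LinearMap.ker (fromBlocks B Jᵀ J 0).mulVecLin =
      (LinearMap.ker Jᵀ.mulVecLin).map (sumElimZero K ι) := by
  refine le_antisymm (fun w hw => ?_) (map_ker_transpose_le_ker_fromBlocks B J)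
  rw [LinearMap.mem_ker, mulVecLin_apply, ← Sum.elim_comp_inl_inr w,
    fromBlocks_mulVec_sumElim_eq_zero_iff B hJ] at hw
  refine ⟨w ∘ Sum.inr, hw.2, ?_⟩
  rw [sumElimZero_apply, ← hw.1, Sum.elim_comp_inl_inr]

theorem rank_fromBlocks_eq_two_mul_iff (B : Matrix ι ι K) (J : Matrix κ ι K) :
    (fromBlocks B Jᵀ J 0).rank = 2 * Fintype.card ι ↔ J.rank = Fintype.card ι := by
  have hmap (p : Submodule K (κ → K)) : finrank K (p.map (sumElimZero K ι)) = finrank K p :=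
    (Submodule.equivMapOfInjective _ sumElimZero_injective p).finrank_eq.symm
  have hH := rank_add_finrank_ker_mulVecLin (fromBlocks B Jᵀ J 0)
  have hJt := rank_add_finrank_ker_mulVecLin Jᵀ
  have hJw := J.rank_le_card_width
  have hJh := J.rank_le_card_height
  rw [rank_transpose] at hJt
  rw [Fintype.card_sum] at hH
  constructor
  · intro h
    have := Submodule.finrank_mono (map_ker_transpose_le_ker_fromBlocks B J)
    rw [hmap] at this
    omega
  · intro h
    rw [ker_fromBlocks_eq_map_ker_transpose B (ker_mulVecLin_eq_bot_iff_rank_eq.2 h), hmap] at hH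
    omega

theorem fromBlocks_mulVec_eq_zero_iff_exists_smul_crossVec {n : ℕ}
    (B : Matrix (Fin n) (Fin n) K) {J : Matrix (Fin (n+1)) (Fin n) K} (hJ : J.rank = n)
    (w : Fin n ⊕ Fin (n+1) → K) :
    fromBlocks B Jᵀ J 0 *ᵥ w = 0 ↔ ∃ c : K, w = c • Sum.elim (0 : Fin n → K) (crossVec J) := by
  have hJ' : LinearMap.ker J.mulVecLin = ⊥ := by
    rw [ker_mulVecLin_eq_bot_iff_rank_eq, hJ, Fintype.card_fin]
  rw [← mulVecLin_apply, ← LinearMap.mem_ker, ker_fromBlocks_eq_map_ker_transpose B hJ',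
    ker_transpose_mulVecLin_eq_span_crossVec hJ, Submodule.map_span, Set.image_singleton,
    Submodule.mem_span_singleton, sumElimZero_apply]
  exact exists_congr fun c => eq_comm

end Field

section Calculus

variable {ι κ : Type*}

variable (ι κ) in
noncomputable def inlCLM : (ι ⊕ κ → ℝ) →L[ℝ] (ι → ℝ) :=
  ContinuousLinearMap.pi fun j => ContinuousLinearMap.proj (Sum.inl j)

theorem inlCLM_apply (z : ι ⊕ κ → ℝ) : inlCLM ι κ z = fun j => z (Sum.inl j) := rfl

@[simp]
theorem inlCLM_single_inl [DecidableEq ι] [DecidableEq κ] (k : ι) :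
    inlCLM ι κ (Pi.single (Sum.inl k) 1) = Pi.single k 1 := by
  ext j
  simp [inlCLM_apply, Pi.single_apply]

@[simp]
theorem inlCLM_single_inr [DecidableEq ι] [DecidableEq κ] (i : κ) :
    inlCLM ι κ (Pi.single (Sum.inr i) 1) = 0 := by
  ext j
  simp [inlCLM_apply]

variable [Fintype ι] [Fintype κ] {z : ι ⊕ κ → ℝ} {q : (ι → ℝ) → ℝ} {a : κ → (ι → ℝ) → ℝ}

theorem hasFDerivAt_comp_inl (hq : DifferentiableAt ℝ q fun j => z (Sum.inl j)) :
    HasFDerivAt (fun z' => q fun j => z' (Sum.inl j))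
      ((fderiv ℝ q fun j => z (Sum.inl j)).comp (inlCLM ι κ)) z :=
  hq.hasFDerivAt.comp z (inlCLM ι κ).hasFDerivAt

theorem hasFDerivAt_sum_mul_add (ha : ∀ i, DifferentiableAt ℝ (a i) fun j => z (Sum.inl j))
    (hq : DifferentiableAt ℝ q fun j => z (Sum.inl j)) :
    HasFDerivAt (fun z' => (∑ i, a i (fun j => z' (Sum.inl j)) * z' (Sum.inr i))
        + q fun j => z' (Sum.inl j))
      ((∑ i, (a i (fun j => z (Sum.inl j)) • ContinuousLinearMap.proj (Sum.inr i)
          + z (Sum.inr i) • (fderiv ℝ (a i) fun j => z (Sum.inl j)).comp (inlCLM ι κ)))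
        + (fderiv ℝ q fun j => z (Sum.inl j)).comp (inlCLM ι κ)) z :=
  .add (.fun_sum fun i _ => (hasFDerivAt_comp_inl (ha i)).mul (hasFDerivAt_apply _ _))
    (hasFDerivAt_comp_inl hq)

variable [DecidableEq ι] [DecidableEq κ]

theorem pd1_congr {f g : (ι → ℝ) → ℝ} {x : ι → ℝ} (h : f =ᶠ[nhds x] g) (i : ι) :
    pd1 f i x = pd1 g i x := by
  rw [pd1, pd1, h.fderiv_eq]

theorem pd1_comp_inl_inl (hq : DifferentiableAt ℝ q fun j => z (Sum.inl j)) (k : ι) :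
    pd1 (fun z' => q fun j => z' (Sum.inl j)) (Sum.inl k) z =
      fderiv ℝ q (fun j => z (Sum.inl j)) (Pi.single k 1) := by
  rw [pd1, (hasFDerivAt_comp_inl hq).fderiv]
  simp

theorem pd1_comp_inl_inr (hq : DifferentiableAt ℝ q fun j => z (Sum.inl j)) (i : κ) :
    pd1 (fun z' => q fun j => z' (Sum.inl j)) (Sum.inr i) z = 0 := by
  rw [pd1, (hasFDerivAt_comp_inl hq).fderiv]
  simp

theorem pd1_sum_mul_add_inl (ha : ∀ i, DifferentiableAt ℝ (a i) fun j => z (Sum.inl j))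
    (hq : DifferentiableAt ℝ q fun j => z (Sum.inl j)) (k : ι) :
    pd1 (fun z' => (∑ i, a i (fun j => z' (Sum.inl j)) * z' (Sum.inr i))
        + q fun j => z' (Sum.inl j)) (Sum.inl k) z =
      (∑ i, fderiv ℝ (a i) (fun j => z (Sum.inl j)) (Pi.single k 1) * z (Sum.inr i))
        + fderiv ℝ q (fun j => z (Sum.inl j)) (Pi.single k 1) := by
  rw [pd1, (hasFDerivAt_sum_mul_add ha hq).fderiv]
  simp [mul_comm]

theorem pd1_sum_mul_add_inr (ha : ∀ i, DifferentiableAt ℝ (a i) fun j => z (Sum.inl j))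
    (hq : DifferentiableAt ℝ q fun j => z (Sum.inl j)) (i : κ) :
    pd1 (fun z' => (∑ i, a i (fun j => z' (Sum.inl j)) * z' (Sum.inr i))
        + q fun j => z' (Sum.inl j)) (Sum.inr i) z = a i fun j => z (Sum.inl j) := by
  rw [pd1, (hasFDerivAt_sum_mul_add ha hq).fderiv]
  simp [Pi.single_apply]

end Calculus

theorem ContDiffOn.differentiableAt_fderiv_apply {E G : Type*} [NormedAddCommGroup E]
    [NormedSpace ℝ E] [NormedAddCommGroup G] [NormedSpace ℝ G] {f : E → G} {M : Set E}
    (hf : ContDiffOn ℝ 2 f M) (hM : IsOpen M) {u : E} (hu : u ∈ M) (v : E) :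
    DifferentiableAt ℝ (fun w => fderiv ℝ f w v) u :=
  (((hf.contDiffAt (hM.mem_nhds hu)).fderiv_right (m := 1) (by norm_num)).differentiableAt
    one_ne_zero).clm_apply (differentiableAt_const v)

section Hessian

variable {m k : ℕ} {M : Set (Fin m → ℝ)} {A : (Fin m → ℝ) → (Fin k → ℝ)}
  {Q : (Fin m → ℝ) → ℝ} {F : (Fin m ⊕ Fin k → ℝ) → ℝ} {z : Fin m ⊕ Fin k → ℝ}

theorem eventually_comp_inl_mem (hM : IsOpen M) (hz : (fun j => z (Sum.inl j)) ∈ M) :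
    ∀ᶠ z' in nhds z, (fun j => z' (Sum.inl j)) ∈ M :=
  (hM.preimage (inlCLM (Fin m) (Fin k)).continuous).mem_nhds hz

theorem pd1_inr_eventuallyEq (hM : IsOpen M) (hA : DifferentiableOn ℝ A M)
    (hQ : DifferentiableOn ℝ Q M)
    (hF : ∀ z, F z = (∑ i, A (fun j => z (Sum.inl j)) i * z (Sum.inr i))
      + Q (fun j => z (Sum.inl j)))
    (hz : (fun j => z (Sum.inl j)) ∈ M) (i : Fin k) :
    pd1 F (Sum.inr i) =ᶠ[nhds z] fun z' => A (fun j => z' (Sum.inl j)) i := by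
  filter_upwards [eventually_comp_inl_mem hM hz] with z' hz'
  rw [show F = _ from funext hF]
  exact pd1_sum_mul_add_inr (a := fun i v => A v i)
    (fun i => (differentiableOn_pi.1 hA i).differentiableAt (hM.mem_nhds hz'))
    (hQ.differentiableAt (hM.mem_nhds hz')) i

theorem pd1_inl_eventuallyEq (hM : IsOpen M) (hA : DifferentiableOn ℝ A M)
    (hQ : DifferentiableOn ℝ Q M)
    (hF : ∀ z, F z = (∑ i, A (fun j => z (Sum.inl j)) i * z (Sum.inr i))
      + Q (fun j => z (Sum.inl j)))
    (hz : (fun j => z (Sum.inl j)) ∈ M) (l : Fin m) :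
    pd1 F (Sum.inl l) =ᶠ[nhds z] fun z' =>
      (∑ i, fderiv ℝ (fun v => A v i) (fun j => z' (Sum.inl j)) (Pi.single l 1) * z' (Sum.inr i))
        + fderiv ℝ Q (fun j => z' (Sum.inl j)) (Pi.single l 1) := by
  filter_upwards [eventually_comp_inl_mem hM hz] with z' hz'
  rw [show F = _ from funext hF]
  exact pd1_sum_mul_add_inl (a := fun i v => A v i)
    (fun i => (differentiableOn_pi.1 hA i).differentiableAt (hM.mem_nhds hz'))
    (hQ.differentiableAt (hM.mem_nhds hz')) l

theorem hessM_eq_fromBlocks (hM : IsOpen M) (hA : ContDiffOn ℝ 2 A M)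
    (hQ : ContDiffOn ℝ 2 Q M)
    (hF : ∀ z, F z = (∑ i, A (fun j => z (Sum.inl j)) i * z (Sum.inr i))
      + Q (fun j => z (Sum.inl j)))
    (hz : (fun j => z (Sum.inl j)) ∈ M) :
    hessM F z = fromBlocks (hessM F z).toBlocks₁₁ (Jac A fun j => z (Sum.inl j))ᵀ
      (Jac A fun j => z (Sum.inl j)) 0 := by
  have hA₁ := hA.differentiableOn (by norm_num)
  have hQ₁ := hQ.differentiableOn (by norm_num)
  have hAi (i : Fin k) : DifferentiableAt ℝ (fun v => A v i) fun j => z (Sum.inl j) :=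
    (differentiableOn_pi.1 hA₁ i).differentiableAt (hM.mem_nhds hz)
  conv_lhs => rw [← fromBlocks_toBlocks (hessM F z)]
  congr 1 <;> ext r c
  · rw [toBlocks₁₂, hessM, of_apply, of_apply,
      pd1_congr (pd1_inr_eventuallyEq hM hA₁ hQ₁ hF hz c), pd1_comp_inl_inl (hAi c)]
    rfl
  · rw [toBlocks₂₁, hessM, of_apply, of_apply,
      pd1_congr (pd1_inl_eventuallyEq hM hA₁ hQ₁ hF hz c),
      pd1_sum_mul_add_inr
        (fun i => (contDiffOn_pi.1 hA i).differentiableAt_fderiv_apply hM hz _)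
        (hQ.differentiableAt_fderiv_apply hM hz _)]
    rfl
  · rw [toBlocks₂₂, hessM, of_apply, of_apply,
      pd1_congr (pd1_inr_eventuallyEq hM hA₁ hQ₁ hF hz c), pd1_comp_inl_inr (hAi c)]
    rfl

end Hessian

theorem stmt16_general (n : ℕ)
    (M : Set (Fin n → ℝ)) (hM : IsOpen M)
    (A : (Fin n → ℝ) → (Fin (n+1) → ℝ)) (hA : ContDiffOn ℝ (⊤ : ℕ∞) A M)
    (Q : (Fin n → ℝ) → ℝ) (hQ : ContDiffOn ℝ (⊤ : ℕ∞) Q M)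
    (F : ((Fin n ⊕ Fin (n+1)) → ℝ) → ℝ)
    (hF : ∀ z, F z = (∑ i : Fin (n+1), A (fun j => z (Sum.inl j)) i * z (Sum.inr i))
      + Q (fun j => z (Sum.inl j)))
    (V : (Fin n → ℝ) → ((Fin n ⊕ Fin (n+1)) → ℝ))
    (hV : ∀ u, V u = Sum.elim (0 : Fin n → ℝ)
      (fun i : Fin (n+1) => (-1 : ℝ) ^ (i : ℕ) * minorDel A i u)) :
    ((∀ u ∈ M, (Jac A u).rank = n) ↔
      (∀ z : (Fin n ⊕ Fin (n+1)) → ℝ, (fun j => z (Sum.inl j)) ∈ M →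
        (hessM F z).rank = 2*n)) ∧
    ((∀ u ∈ M, (Jac A u).rank = n) →
      ∀ z : (Fin n ⊕ Fin (n+1)) → ℝ, (fun j => z (Sum.inl j)) ∈ M →
        ∀ w : (Fin n ⊕ Fin (n+1)) → ℝ,
          (hessM F z *ᵥ w = 0 ↔ ∃ c : ℝ, w = c • V (fun j => z (Sum.inl j)))) := by
  have hH {z : Fin n ⊕ Fin (n+1) → ℝ} (hz : (fun j => z (Sum.inl j)) ∈ M) :=
    hessM_eq_fromBlocks hM (hA.of_le (by norm_cast)) (hQ.of_le (by norm_cast)) hF hz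
  have hrank {z : Fin n ⊕ Fin (n+1) → ℝ} (hz : (fun j => z (Sum.inl j)) ∈ M) :
      (hessM F z).rank = 2 * n ↔ (Jac A fun j => z (Sum.inl j)).rank = n := by
    rw [hH hz]
    simpa using rank_fromBlocks_eq_two_mul_iff (hessM F z).toBlocks₁₁ _
  refine ⟨⟨fun hJ z hz => (hrank hz).2 (hJ _ hz), fun hHess u hu => ?_⟩, fun hJ z hz w => ?_⟩
  · exact (hrank (z := Sum.elim u 0) hu).1 (hHess _ hu)
  · -- `V u` is `Sum.elim 0 (crossVec (Jac A u))` by unfolding `minorDel`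
    rw [hH hz, hV]
    exact fromBlocks_mulVec_eq_zero_iff_exists_smul_crossVec _ (hJ _ hz) w

/-- `A` is an immersion (its Jacobian has rank `n` everywhere on `M`)
iff `Hess F` has rank `2n` at every point of `M × ℝ^{n+1}`; and in that case the
kernel of `Hess F` at each point is exactly the line spanned by `V`. -/
theorem stmt16 (n : ℕ) (hn : 1 ≤ n)
    (M : Set (Fin n → ℝ)) (hM : IsOpen M)
    (A : (Fin n → ℝ) → (Fin (n+1) → ℝ)) (hA : ContDiffOn ℝ (⊤ : ℕ∞) A M)
    (Q : (Fin n → ℝ) → ℝ) (hQ : ContDiffOn ℝ (⊤ : ℕ∞) Q M)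
    (F : ((Fin n ⊕ Fin (n+1)) → ℝ) → ℝ)
    (hF : ∀ z, F z = (∑ i : Fin (n+1), A (fun j => z (Sum.inl j)) i * z (Sum.inr i))
      + Q (fun j => z (Sum.inl j)))
    (V : (Fin n → ℝ) → ((Fin n ⊕ Fin (n+1)) → ℝ))
    (hV : ∀ u, V u = Sum.elim (0 : Fin n → ℝ)
      (fun i : Fin (n+1) => (-1 : ℝ) ^ (i : ℕ) * minorDel A i u)) :
    ((∀ u ∈ M, (Jac A u).rank = n) ↔
      (∀ z : (Fin n ⊕ Fin (n+1)) → ℝ, (fun j => z (Sum.inl j)) ∈ M →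
        (hessM F z).rank = 2*n)) ∧
    ((∀ u ∈ M, (Jac A u).rank = n) →
      ∀ z : (Fin n ⊕ Fin (n+1)) → ℝ, (fun j => z (Sum.inl j)) ∈ M →
        ∀ w : (Fin n ⊕ Fin (n+1)) → ℝ,
          (hessM F z *ᵥ w = 0 ↔ ∃ c : ℝ, w = c • V (fun j => z (Sum.inl j)))) :=
  stmt16_general n M hM A hA Q hQ F hF V hV
end
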